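/- Let r(t;θ,r₀) be the solution of the radial collapse ODE. There exist smooth functions A, B of (θ,r₀) ∈ [0,π]×(r₊,∞) such that for every compact interval [r₁,r₂] ⊂ (r₊,∞) there is a constant C > 0 with |r_*(r(t;θ,r₀)) + t + A(θ,r₀)·e^{−2κ₊t} − B(θ,r₀)| ≤ C·e^{−4κ₊t} for all t ≥ 0, θ ∈ [0,π] and r₀ ∈ [r₁,r₂]. -/

import Mathlib

/-!
STATEMENT 5 (Regge–Wheeler asymptotics along the collapse).

Let `r(t;θ,r₀)` be the solution of the radial collapse ODE.  There exist
smooth functions `A, B` of `(θ,r₀) ∈ [0,π]×(r₊,∞)` such that for every compact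
interval `[r₁,r₂] ⊂ (r₊,∞)` there is a constant `C > 0` with
`|r_*(r(t;θ,r₀)) + t + A(θ,r₀)e^{−2κ₊t} − B(θ,r₀)| ≤ C·e^{−4κ₊t}`
for all `t ≥ 0`, `θ ∈ [0,π]` and `r₀ ∈ [r₁,r₂]`.
-/

noncomputable section
open Real Set

namespace Stmt5

/-- `Δ(r) = r² − 2Mr + a² + Q²`. -/
def Δ (M a Q r : ℝ) : ℝ := r ^ 2 - 2 * M * r + a ^ 2 + Q ^ 2

/-- Outer horizon `r₊`. -/
def rplus (M a Q : ℝ) : ℝ := M + Real.sqrt (M ^ 2 - (a ^ 2 + Q ^ 2))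

/-- Inner horizon `r₋`. -/
def rminus (M a Q : ℝ) : ℝ := M - Real.sqrt (M ^ 2 - (a ^ 2 + Q ^ 2))

/-- Surface gravity of the outer horizon. -/
def κplus (M a Q : ℝ) : ℝ :=
  (rplus M a Q - rminus M a Q) / (2 * ((rplus M a Q) ^ 2 + a ^ 2))

/-- Surface gravity of the inner horizon. -/
def κminus (M a Q : ℝ) : ℝ :=
  (rplus M a Q - rminus M a Q) / (2 * ((rminus M a Q) ^ 2 + a ^ 2))

/-- `σ²(r,θ) = (r²+a²)² − a²Δ(r)sin²θ`. -/
def sigma2 (M a Q r θ : ℝ) : ℝ :=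
  (r ^ 2 + a ^ 2) ^ 2 - a ^ 2 * Δ M a Q r * Real.sin θ ^ 2

/-- The Regge–Wheeler coordinate
`r_*(r) = r + (1/(2κ₊))ln(r−r₊) − (1/(2κ₋))ln(r−r₋) + R₀`. -/
def rstar (M a Q R0 r : ℝ) : ℝ :=
  r + (1 / (2 * κplus M a Q)) * Real.log (r - rplus M a Q)
    - (1 / (2 * κminus M a Q)) * Real.log (r - rminus M a Q) + R0

/-- Right-hand side of the radial collapse ODE. -/
def V (M a Q θ r : ℝ) : ℝ :=
  -Real.sqrt ((r ^ 2 + a ^ 2) * (2 * M * r - Q ^ 2)) * Δ M a Q r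
    / sigma2 M a Q r θ

end Stmt5

/-!
Along the collapse `ṙ = -Δ(r) speed(θ, r)` with `speed > 0`, a primitive `phase` of
`1 / (Δ speed)` satisfies `phase (r t) + t = phase r₀`. As `Δ` has a simple zero at `r₊`,
`1 / (Δ speed) = residue / (r - r₊)` with `residue` regular and `residue(r₊) = 1 / (2κ₊)`, so
`phase = log (r - r₊) / (2κ₊) + Ψ` with `Ψ` smooth up to the horizon and `Ψ(r₊) = 0`.
Exponentiating the conservation law gives `r(t) - r₊ = α e^{-2κ₊t} e^{-2κ₊Ψ(r(t))}` with
`α = (r₀ - r₊) e^{2κ₊Ψ(r₀)}`, so `r(t) - r₊ = α e^{-2κ₊t} + O(e^{-4κ₊t})`. Similarly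
`r_* = phase + g + R₀` with `g` smooth across `r₊`, and the first-order Taylor expansion of `g`
at `r₊` yields `A = -g'(r₊) α` and `B = phase r₀ + g(r₊) + R₀`. Smoothness of `Ψ` in `(θ, r)`
follows from Hadamard's lemma, writing difference quotients and primitives as averages over
`[0, 1]` of smooth integrands; uniformity in `(θ, r₀)` comes from compactness of
`[0, π] × [r₊, r₂]`.
-/

open scoped ContDiff

universe u

theorem hasFDerivAt_intervalIntegral_of_contDiff_uncurry {E F : Type*} [NormedAddCommGroup E]
    [NormedSpace ℝ E] [ProperSpace E] [NormedAddCommGroup F] [NormedSpace ℝ F] {φ : E → ℝ → F}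
    (hφ : ContDiff ℝ 1 ↿φ) (a b : ℝ) (p : E) :
    HasFDerivAt (fun p => ∫ s in a..b, φ p s)
      (∫ s in a..b, (fderiv ℝ ↿φ (p, s)).comp (ContinuousLinearMap.inl ℝ E ℝ)) p := by
  have hφc : Continuous ↿φ := hφ.continuous
  have hφ' : Continuous (fderiv ℝ ↿φ) := hφ.continuous_fderiv one_ne_zero
  obtain ⟨C, hC⟩ := ((isCompact_closedBall p 1).prod isCompact_uIcc).exists_bound_of_continuousOn
    (hφ'.norm.continuousOn (s := Metric.closedBall p 1 ×ˢ uIcc a b))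
  refine intervalIntegral.hasFDerivAt_integral_of_dominated_of_fderiv_le (F := φ)
    (F' := fun q s => (fderiv ℝ ↿φ (q, s)).comp (ContinuousLinearMap.inl ℝ E ℝ))
    (bound := fun _ => C)
    (Metric.ball_mem_nhds p one_pos) (Filter.Eventually.of_forall fun q =>
      (hφc.comp (Continuous.prodMk_right q)).aestronglyMeasurable)
    ((hφc.comp (Continuous.prodMk_right p)).intervalIntegrable a b)
    ((hφ'.comp (Continuous.prodMk_right p)).clm_comp continuous_const).aestronglyMeasurable
    (Filter.Eventually.of_forall fun s hs q hq => ?_) intervalIntegrable_const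
    (Filter.Eventually.of_forall fun s _ q _ => ?_)
  · calc ‖(fderiv ℝ ↿φ (q, s)).comp (ContinuousLinearMap.inl ℝ E ℝ)‖
        ≤ ‖fderiv ℝ ↿φ (q, s)‖ * ‖ContinuousLinearMap.inl ℝ E ℝ‖ :=
          ContinuousLinearMap.opNorm_comp_le _ _
      _ ≤ C * 1 := by
          gcongr
          · exact (norm_nonneg _).trans (hC (q, s) ⟨Metric.ball_subset_closedBall hq,
              uIoc_subset_uIcc hs⟩)
          · simpa using hC (q, s) ⟨Metric.ball_subset_closedBall hq, uIoc_subset_uIcc hs⟩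
          · exact ContinuousLinearMap.norm_inl_le_one ℝ E ℝ
      _ = C := mul_one C
  · have hφqs : HasFDerivAt ↿φ (fderiv ℝ ↿φ (q, s)) (q, s) :=
      (hφ.differentiable one_ne_zero (q, s)).hasFDerivAt
    exact hφqs.comp q (hasFDerivAt_prodMk_left (𝕜 := ℝ) q s)

theorem contDiff_intervalIntegral_of_contDiff_uncurry {E F : Type u} [NormedAddCommGroup E]
    [NormedSpace ℝ E] [ProperSpace E] [NormedAddCommGroup F] [NormedSpace ℝ F] {φ : E → ℝ → F}
    (hφ : ContDiff ℝ ∞ ↿φ) (a b : ℝ) : ContDiff ℝ ∞ fun p => ∫ s in a..b, φ p s := by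
  -- the induction replaces `F` by `E →L[ℝ] F`, hence `E` and `F` share a universe
  suffices ∀ n : ℕ, ∀ (F : Type u) [NormedAddCommGroup F] [NormedSpace ℝ F]
      (φ : E → ℝ → F), ContDiff ℝ ∞ ↿φ → ContDiff ℝ n fun p => ∫ s in a..b, φ p s from
    contDiff_infty.2 fun n => this n F φ hφ
  intro n
  induction n with
  | zero =>
    intro F _ _ φ hφ
    have hφ1 : ContDiff ℝ 1 ↿φ := hφ.of_le (by simp)
    exact contDiff_zero.2 (Differentiable.continuous fun p =>
      (hasFDerivAt_intervalIntegral_of_contDiff_uncurry hφ1 a b p).differentiableAt)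
  | succ n ih =>
    intro F _ _ φ hφ
    have hφ1 : ContDiff ℝ 1 ↿φ := hφ.of_le (by simp)
    rw [Nat.cast_succ, contDiff_succ_iff_fderiv]
    refine ⟨fun p => (hasFDerivAt_intervalIntegral_of_contDiff_uncurry hφ1 a b p).differentiableAt,
      by simp, ?_⟩
    rw [funext fun p => (hasFDerivAt_intervalIntegral_of_contDiff_uncurry hφ1 a b p).fderiv]
    exact ih (E →L[ℝ] F) (fun p s => (fderiv ℝ ↿φ (p, s)).comp (ContinuousLinearMap.inl ℝ E ℝ))
      ((hφ.fderiv_right (by simp)).clm_comp contDiff_const)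

section SegmentAverage

variable {E : Type*}

def segmentAverage (k : E → ℝ → ℝ) (c : ℝ) (θ : E) (x : ℝ) : ℝ :=
  ∫ s in (0 : ℝ)..1, k θ (c + s * (x - c))

theorem sub_mul_segmentAverage (k : E → ℝ → ℝ) (c : ℝ) (θ : E) (x : ℝ) :
    (x - c) * segmentAverage k c θ x = ∫ u in c..x, k θ u := by
  rcases eq_or_ne x c with rfl | hxc
  · simp
  have hsub := intervalIntegral.integral_comp_mul_add (a := 0) (b := 1) (k θ) (sub_ne_zero.2 hxc) c
  simp only [mul_zero, zero_add, mul_one, sub_add_cancel, smul_eq_mul] at hsub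
  have hlin : ∀ s, c + s * (x - c) = (x - c) * s + c := fun s => by ring
  simp only [segmentAverage, hlin, hsub, mul_inv_cancel_left₀ (sub_ne_zero.2 hxc)]

theorem sub_mul_segmentAverage_deriv [NormedAddCommGroup E] [NormedSpace ℝ E] {f : E → ℝ → ℝ}
    (hf : ContDiff ℝ 1 ↿f) (c : ℝ) (θ : E) (x : ℝ) :
    (x - c) * segmentAverage (fun θ => deriv (f θ)) c θ x = f θ x - f θ c := by
  have hfθ : ContDiff ℝ 1 (f θ) := hf.comp (contDiff_const.prodMk contDiff_id)
  rw [sub_mul_segmentAverage, intervalIntegral.integral_deriv_eq_sub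
    (fun y _ => hfθ.differentiable one_ne_zero y)
    ((hfθ.continuous_deriv le_rfl).intervalIntegrable _ _)]

end SegmentAverage

section SegmentAverageSmooth

variable {E : Type} [NormedAddCommGroup E] [NormedSpace ℝ E] [ProperSpace E]

theorem contDiff_segmentAverage {k : E → ℝ → ℝ} (hk : ContDiff ℝ ∞ ↿k) (c : ℝ) :
    ContDiff ℝ ∞ ↿(segmentAverage k c) :=
  contDiff_intervalIntegral_of_contDiff_uncurry
    (φ := fun (p : E × ℝ) s => k p.1 (c + s * (p.2 - c)))
    (hk.comp ((contDiff_fst.comp contDiff_fst).prodMk (contDiff_const.add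
      (contDiff_snd.mul ((contDiff_snd.comp contDiff_fst).sub contDiff_const))))) 0 1

theorem contDiff_uncurry_primitive {k : E → ℝ → ℝ} (hk : ContDiff ℝ ∞ ↿k) (c : ℝ) :
    ContDiff ℝ ∞ ↿(fun θ x => ∫ u in c..x, k θ u) := by
  simp_rw [← sub_mul_segmentAverage]
  exact (contDiff_snd.sub contDiff_const).mul (contDiff_segmentAverage hk c)

end SegmentAverageSmooth

def ramp (c d x : ℝ) : ℝ := d + (x - d) * smoothTransition ((x - c) / (d - c))

theorem contDiff_ramp (c d : ℝ) : ContDiff ℝ ∞ (ramp c d) :=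
  contDiff_const.add ((contDiff_id.sub contDiff_const).mul
    (smoothTransition.contDiff.comp ((contDiff_id.sub contDiff_const).div_const _)))

theorem ramp_of_le {c d x : ℝ} (hcd : c < d) (hx : d ≤ x) : ramp c d x = x := by
  rw [ramp, smoothTransition.one_of_one_le ((one_le_div (sub_pos.2 hcd)).2 (by linarith))]
  ring

theorem lt_ramp {c d : ℝ} (hcd : c < d) (x : ℝ) : c < ramp c d x := by
  rcases le_or_gt x c with hxc | hxc
  · rw [ramp, smoothTransition.zero_of_nonpos (div_nonpos_of_nonpos_of_nonneg (by linarith)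
      (by linarith))]
    linarith
  rcases le_or_gt d x with hdx | hxd
  · rw [ramp_of_le hcd hdx]; linarith
  · have h1 := smoothTransition.le_one ((x - c) / (d - c))
    have h2 : (x - d) * 1 ≤ (x - d) * smoothTransition ((x - c) / (d - c)) :=
      mul_le_mul_of_nonpos_left h1 (by linarith)
    rw [ramp]; linarith

theorem exists_abs_le_of_continuous_uncurry {X : Type*} [TopologicalSpace X] {φ : X → ℝ → ℝ}
    (hφ : Continuous ↿φ) {s : Set X} (hs : IsCompact s) (c d : ℝ) :
    ∃ L, 0 ≤ L ∧ ∀ θ ∈ s, ∀ x ∈ Icc c d, |φ θ x| ≤ L := by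
  obtain ⟨L, hL⟩ := (hs.prod isCompact_Icc).exists_bound_of_continuousOn hφ.continuousOn
  exact ⟨max L 0, le_max_right _ _, fun θ hθ x hx =>
    (hL (θ, x) (mk_mem_prod hθ hx)).trans (le_max_left _ _)⟩

section SliceBounds

variable {E : Type*} [NormedAddCommGroup E] [NormedSpace ℝ E]

theorem ContDiff.uncurry_deriv {F : Type*} [NormedAddCommGroup F] [NormedSpace ℝ F]
    {φ : E → ℝ → F} {m n : WithTop ℕ∞} (hφ : ContDiff ℝ n ↿φ) (hmn : m + 1 ≤ n) :
    ContDiff ℝ m ↿(fun θ => deriv (φ θ)) :=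
  (ContDiff.fderiv (f := fun p : E × ℝ => φ p.1)
    (hφ.comp ((contDiff_fst.comp contDiff_fst).prodMk contDiff_snd)) contDiff_snd hmn).clm_apply
    contDiff_const

theorem ContDiff.differentiable_slice {F : Type*} [NormedAddCommGroup F] [NormedSpace ℝ F]
    {φ : E → ℝ → F} {n : WithTop ℕ∞} (hφ : ContDiff ℝ n ↿φ) (hn : n ≠ 0) (θ : E) :
    Differentiable ℝ (φ θ) :=
  (hφ.comp (contDiff_const.prodMk contDiff_id)).differentiable hn

theorem exists_abs_sub_le_mul_of_contDiff {φ : E → ℝ → ℝ} (hφ : ContDiff ℝ 1 ↿φ) {s : Set E}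
    (hs : IsCompact s) (c d : ℝ) :
    ∃ L, 0 ≤ L ∧ ∀ θ ∈ s, ∀ x ∈ Icc c d, |φ θ x - φ θ c| ≤ L * (x - c) := by
  obtain ⟨L, hL, hbound⟩ := exists_abs_le_of_continuous_uncurry
    ((hφ.uncurry_deriv (m := 0) le_rfl).continuous) hs c d
  refine ⟨L, hL, fun θ hθ x hx => ?_⟩
  exact norm_image_sub_le_of_norm_deriv_le_segment'
    (fun y _ => (hφ.differentiable_slice one_ne_zero θ y).hasDerivAt.hasDerivWithinAt)
    (fun y hy => hbound θ hθ y (Ico_subset_Icc_self hy)) x hx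

theorem exists_abs_sub_sub_deriv_le_mul_sq_of_contDiff {φ : E → ℝ → ℝ} (hφ : ContDiff ℝ 2 ↿φ)
    {s : Set E} (hs : IsCompact s) (c d : ℝ) : ∃ L, 0 ≤ L ∧ ∀ θ ∈ s, ∀ x ∈ Icc c d,
      |φ θ x - φ θ c - deriv (φ θ) c * (x - c)| ≤ L * (x - c) ^ 2 := by
  obtain ⟨L, hL, hlip⟩ := exists_abs_sub_le_mul_of_contDiff
    (hφ.uncurry_deriv (m := 1) (by norm_num)) hs c d
  refine ⟨L, hL, fun θ hθ x hx => ?_⟩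
  -- mean value theorem for `y ↦ φ θ y - φ' θ c * y`, whose derivative is `≤ L (x - c)` on `[c, x]`
  have hmvt := norm_image_sub_le_of_norm_deriv_le_segment' (a := c) (b := x)
    (f := fun y => φ θ y - deriv (φ θ) c * y) (C := L * (x - c))
    (fun y _ => (((hφ.differentiable_slice two_ne_zero θ y).hasDerivAt).sub
      ((hasDerivAt_id y).const_mul _)).hasDerivWithinAt)
    (fun y hy => by
      rw [Real.norm_eq_abs, mul_one]
      exact (hlip θ hθ y ⟨hy.1, hy.2.le.trans hx.2⟩).trans
        (mul_le_mul_of_nonneg_left (by linarith [hy.2]) hL))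
    x ⟨hx.1, le_rfl⟩
  rw [Real.norm_eq_abs] at hmvt
  calc |φ θ x - φ θ c - deriv (φ θ) c * (x - c)|
      = |φ θ x - deriv (φ θ) c * x - (φ θ c - deriv (φ θ) c * c)| := by ring_nf
    _ ≤ L * (x - c) * (x - c) := hmvt
    _ = L * (x - c) ^ 2 := by ring

end SliceBounds

section Trajectories

variable {r v : ℝ → ℝ} {U : Set ℝ}

theorem le_initial_of_hasDerivAt_nonpos
    (hr : ∀ t, 0 ≤ t → r t ∈ U ∧ HasDerivAt r (v (r t)) t) (hv : ∀ x ∈ U, v x ≤ 0)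
    {t : ℝ} (ht : 0 ≤ t) : r t ≤ r 0 := by
  refine antitoneOn_of_hasDerivWithinAt_nonpos (f' := fun s => v (r s)) (convex_Ici 0)
    (fun s hs => (hr s hs).2.continuousAt.continuousWithinAt) (fun s hs => ?_) (fun s hs => ?_)
    self_mem_Ici ht ht
  · exact (hr s (interior_subset hs)).2.hasDerivWithinAt
  · exact hv _ (hr s (interior_subset hs)).1

theorem comp_add_eq_initial_of_deriv_mul_eq_neg_one {P P' : ℝ → ℝ}
    (hr : ∀ t, 0 ≤ t → r t ∈ U ∧ HasDerivAt r (v (r t)) t)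
    (hP : ∀ x ∈ U, HasDerivAt P (P' x) x) (hPv : ∀ x ∈ U, P' x * v x = -1)
    {t : ℝ} (ht : 0 ≤ t) : P (r t) + t = P (r 0) := by
  have hderiv : ∀ s ∈ Icc 0 t, HasDerivAt (fun s => P (r s) + s) 0 s := fun s hs => by
    have h := ((hP _ (hr s hs.1).1).comp s (hr s hs.1).2).add (hasDerivAt_id s)
    rwa [hPv _ (hr s hs.1).1, neg_add_cancel] at h
  simpa using constant_of_has_deriv_right_zero
    (fun s hs => (hderiv s hs).continuousAt.continuousWithinAt)
    (fun s hs => (hderiv s (Ico_subset_Icc_self hs)).hasDerivWithinAt) t ⟨ht, le_rfl⟩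

end Trajectories

theorem eq_mul_exp_of_log_add_eq {κ y y₀ ψ ψ₀ t : ℝ} (hκ : κ ≠ 0) (hy : 0 < y) (hy₀ : 0 < y₀)
    (h : 1 / (2 * κ) * log y + ψ + t = 1 / (2 * κ) * log y₀ + ψ₀) :
    y = y₀ * exp (2 * κ * ψ₀) * exp (-2 * κ * t) * exp (-2 * κ * ψ) := by
  have hlog : log y = log y₀ + 2 * κ * ψ₀ + -2 * κ * t + -2 * κ * ψ := by
    field_simp at h
    linarith
  rw [← exp_log hy, hlog, exp_add, exp_add, exp_add, exp_log hy₀]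

/-- If `w = α e u` with `u = 1 + O(w)`, `w = O(e)` and `D = g w + O(w²)`, then
`D = g α e + O(e²)`. -/
theorem abs_sub_mul_le_of_linearization {D g w α e u L₁ L₂ L₃ K K' : ℝ}
    (hw : w = α * e * u) (hw0 : 0 ≤ w) (hα : 0 ≤ α) (he : 0 ≤ e) (hαK : α ≤ K) (hwK : w ≤ K' * e)
    (hD : |D - g * w| ≤ L₂ * w ^ 2) (hg : |g| ≤ L₃) (hu : |u - 1| ≤ L₁ * w)
    (hL₁ : 0 ≤ L₁) (hL₂ : 0 ≤ L₂) :
    |D - g * (α * e)| ≤ (L₂ * K' ^ 2 + L₃ * K * L₁ * K') * e ^ 2 := by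
  have hL₃ : 0 ≤ L₃ := (abs_nonneg g).trans hg
  have hK : 0 ≤ K := hα.trans hαK
  have hsplit : D - g * (α * e) = (D - g * w) + g * (α * e) * (u - 1) := by rw [hw]; ring
  calc |D - g * (α * e)| ≤ |D - g * w| + |g| * (α * e) * |u - 1| := by
        rw [hsplit]
        refine (abs_add_le _ _).trans_eq ?_
        rw [abs_mul, abs_mul, abs_of_nonneg (mul_nonneg hα he)]
    _ ≤ L₂ * w ^ 2 + L₃ * (K * e) * (L₁ * w) := by gcongr
    _ ≤ L₂ * (K' * e) ^ 2 + L₃ * (K * e) * (L₁ * (K' * e)) := by gcongr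
    _ = (L₂ * K' ^ 2 + L₃ * K * L₁ * K') * e ^ 2 := by ring

namespace Stmt5

variable {M a Q : ℝ}

theorem rminus_lt_rplus (hsub : a ^ 2 + Q ^ 2 < M ^ 2) : rminus M a Q < rplus M a Q := by
  have := Real.sqrt_pos.2 (sub_pos.2 hsub)
  unfold rplus rminus; linarith

theorem M_le_rplus : M ≤ rplus M a Q := by
  have := Real.sqrt_nonneg (M ^ 2 - (a ^ 2 + Q ^ 2))
  unfold rplus; linarith

theorem Δ_eq_mul (hsub : a ^ 2 + Q ^ 2 ≤ M ^ 2) (r : ℝ) :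
    Δ M a Q r = (r - rplus M a Q) * (r - rminus M a Q) := by
  have h := Real.sq_sqrt (sub_nonneg.2 hsub)
  unfold Δ rplus rminus
  linear_combination h

theorem κplus_pos (ha : 0 < a) (hsub : a ^ 2 + Q ^ 2 < M ^ 2) : 0 < κplus M a Q :=
  div_pos (sub_pos.2 (rminus_lt_rplus hsub)) (by positivity)

theorem one_div_two_mul_κplus (ha : 0 < a) (hsub : a ^ 2 + Q ^ 2 < M ^ 2) :
    1 / (2 * κplus M a Q) = (rplus M a Q ^ 2 + a ^ 2) / (rplus M a Q - rminus M a Q) := by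
  have := sub_pos.2 (rminus_lt_rplus hsub)
  have : 0 < rplus M a Q ^ 2 + a ^ 2 := by positivity
  unfold κplus
  field_simp

theorem two_mul_sub_sq_pos (hM : 0 < M) (hsub : a ^ 2 + Q ^ 2 < M ^ 2) {r : ℝ}
    (hr : rminus M a Q < r) : 0 < 2 * M * r - Q ^ 2 := by
  have hΔ := Δ_eq_mul hsub.le r
  have hΔp := Δ_eq_mul hsub.le (rplus M a Q)
  have := M_le_rplus (M := M) (a := a) (Q := Q)
  unfold Δ at hΔ hΔp
  rcases lt_or_ge r (rplus M a Q) with h | h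
  · nlinarith [mul_neg_of_neg_of_pos (sub_neg.2 h) (sub_pos.2 hr)]
  · nlinarith

theorem sigma2_pos (hM : 0 < M) (ha : 0 < a) (hsub : a ^ 2 + Q ^ 2 < M ^ 2) (θ : ℝ) {r : ℝ}
    (hr : rminus M a Q < r) : 0 < sigma2 M a Q r θ := by
  have hsin := Real.sin_sq_le_one θ
  have hpos : 0 < r ^ 2 + a ^ 2 := by positivity
  unfold sigma2
  rcases le_or_gt (Δ M a Q r) 0 with hΔ | hΔ
  · nlinarith [mul_nonneg (mul_nonneg (sq_nonneg a) (neg_nonneg.2 hΔ)) (sq_nonneg (Real.sin θ))]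
  · have hΔlt : Δ M a Q r < r ^ 2 + a ^ 2 := by
      have := two_mul_sub_sq_pos hM hsub hr
      unfold Δ; linarith
    have ha2 : 0 < a ^ 2 := by positivity
    nlinarith [mul_le_mul_of_nonneg_left hsin (mul_nonneg ha2.le hΔ.le),
      mul_lt_mul_of_pos_left hΔlt ha2]

def speed (M a Q θ r : ℝ) : ℝ :=
  Real.sqrt ((r ^ 2 + a ^ 2) * (2 * M * r - Q ^ 2)) / sigma2 M a Q r θ

theorem V_eq_neg_Δ_mul_speed (θ r : ℝ) : V M a Q θ r = -(Δ M a Q r * speed M a Q θ r) := by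
  unfold V speed; ring

theorem speed_pos (hM : 0 < M) (ha : 0 < a) (hsub : a ^ 2 + Q ^ 2 < M ^ 2) (θ : ℝ) {r : ℝ}
    (hr : rminus M a Q < r) : 0 < speed M a Q θ r := by
  have := two_mul_sub_sq_pos hM hsub hr
  exact div_pos (Real.sqrt_pos.2 (by positivity)) (sigma2_pos hM ha hsub θ hr)

theorem Δ_mul_speed_pos (hM : 0 < M) (ha : 0 < a) (hsub : a ^ 2 + Q ^ 2 < M ^ 2) (θ : ℝ) {r : ℝ}
    (hr : rplus M a Q < r) : 0 < Δ M a Q r * speed M a Q θ r := by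
  have := rminus_lt_rplus hsub
  rw [Δ_eq_mul hsub.le]
  exact mul_pos (mul_pos (by linarith) (by linarith)) (speed_pos hM ha hsub θ (by linarith))

def residue (M a Q θ r : ℝ) : ℝ := 1 / ((r - rminus M a Q) * speed M a Q θ r)

theorem residue_rplus (ha : 0 < a) (hsub : a ^ 2 + Q ^ 2 < M ^ 2) (θ : ℝ) :
    residue M a Q θ (rplus M a Q) = 1 / (2 * κplus M a Q) := by
  have hΔ : Δ M a Q (rplus M a Q) = 0 := by rw [Δ_eq_mul hsub.le]; ring
  have h2M : 2 * M * rplus M a Q - Q ^ 2 = rplus M a Q ^ 2 + a ^ 2 := by unfold Δ at hΔ; linarith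
  have hpos : 0 < rplus M a Q ^ 2 + a ^ 2 := by positivity
  have := sub_pos.2 (rminus_lt_rplus hsub)
  rw [one_div_two_mul_κplus ha hsub, residue, speed, sigma2, hΔ, h2M,
    Real.sqrt_mul_self hpos.le, mul_zero, zero_mul, sub_zero]
  field_simp

/-- `residue` is singular at `r₋`; precomposing with a ramp makes it smooth on all of `ℝ²`, as the
parametric-integral lemmas require, without changing it on `[r₊, ∞)`. -/
def smoothResidue (M a Q θ r : ℝ) : ℝ :=
  residue M a Q θ (ramp (rminus M a Q) (rplus M a Q) r)

theorem smoothResidue_of_le (hsub : a ^ 2 + Q ^ 2 < M ^ 2) (θ : ℝ) {r : ℝ}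
    (hr : rplus M a Q ≤ r) : smoothResidue M a Q θ r = residue M a Q θ r := by
  rw [smoothResidue, ramp_of_le (rminus_lt_rplus hsub) hr]

theorem contDiff_smoothResidue (hM : 0 < M) (ha : 0 < a) (hsub : a ^ 2 + Q ^ 2 < M ^ 2) :
    ContDiff ℝ ∞ ↿(smoothResidue M a Q) := by
  set ρ : ℝ × ℝ → ℝ := fun p => ramp (rminus M a Q) (rplus M a Q) p.2
  have hρ : ContDiff ℝ ∞ ρ := (contDiff_ramp _ _).comp contDiff_snd
  have hρgt : ∀ p, rminus M a Q < ρ p := fun p => lt_ramp (rminus_lt_rplus hsub) _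
  have hσ : ContDiff ℝ ∞ fun p : ℝ × ℝ => sigma2 M a Q (ρ p) p.1 := by
    simp only [sigma2, Δ]
    fun_prop
  have hsqrt : ContDiff ℝ ∞ fun p : ℝ × ℝ =>
      Real.sqrt ((ρ p ^ 2 + a ^ 2) * (2 * M * ρ p - Q ^ 2)) := by
    refine ContDiff.sqrt (by fun_prop) fun p => ?_
    have := two_mul_sub_sq_pos hM hsub (hρgt p)
    positivity
  exact contDiff_const.div ((hρ.sub contDiff_const).mul
    (hsqrt.div hσ fun p => (sigma2_pos hM ha hsub p.1 (hρgt p)).ne'))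
    fun p => (mul_pos (sub_pos.2 (hρgt p)) (speed_pos hM ha hsub p.1 (hρgt p))).ne'

def residueSlope (M a Q : ℝ) : ℝ → ℝ → ℝ :=
  segmentAverage (fun θ => deriv (smoothResidue M a Q θ)) (rplus M a Q)

theorem contDiff_residueSlope (hM : 0 < M) (ha : 0 < a) (hsub : a ^ 2 + Q ^ 2 < M ^ 2) :
    ContDiff ℝ ∞ ↿(residueSlope M a Q) :=
  contDiff_segmentAverage ((contDiff_smoothResidue hM ha hsub).uncurry_deriv le_rfl) _

theorem sub_mul_residueSlope (hM : 0 < M) (ha : 0 < a) (hsub : a ^ 2 + Q ^ 2 < M ^ 2)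
    (θ : ℝ) {x : ℝ} (hx : rplus M a Q ≤ x) :
    (x - rplus M a Q) * residueSlope M a Q θ x = residue M a Q θ x - 1 / (2 * κplus M a Q) := by
  rw [residueSlope, sub_mul_segmentAverage_deriv
    ((contDiff_smoothResidue hM ha hsub).of_le (by simp)), smoothResidue_of_le hsub θ hx,
    smoothResidue_of_le hsub θ le_rfl, residue_rplus ha hsub]

def phaseCorrection (M a Q θ x : ℝ) : ℝ := ∫ u in rplus M a Q..x, residueSlope M a Q θ u

theorem contDiff_phaseCorrection (hM : 0 < M) (ha : 0 < a) (hsub : a ^ 2 + Q ^ 2 < M ^ 2) :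
    ContDiff ℝ ∞ ↿(phaseCorrection M a Q) :=
  contDiff_uncurry_primitive (contDiff_residueSlope hM ha hsub) _

theorem hasDerivAt_phaseCorrection (hM : 0 < M) (ha : 0 < a) (hsub : a ^ 2 + Q ^ 2 < M ^ 2)
    (θ x : ℝ) : HasDerivAt (phaseCorrection M a Q θ) (residueSlope M a Q θ x) x := by
  have hslope : Continuous (residueSlope M a Q θ) :=
    ((contDiff_residueSlope hM ha hsub).differentiable_slice (by simp) θ).continuous
  exact intervalIntegral.integral_hasDerivAt_right (hslope.intervalIntegrable _ _)
    hslope.aestronglyMeasurable.stronglyMeasurableAtFilter hslope.continuousAt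

def phase (M a Q θ x : ℝ) : ℝ :=
  1 / (2 * κplus M a Q) * Real.log (x - rplus M a Q) + phaseCorrection M a Q θ x

theorem hasDerivAt_phase (hM : 0 < M) (ha : 0 < a) (hsub : a ^ 2 + Q ^ 2 < M ^ 2) (θ : ℝ)
    {x : ℝ} (hx : rplus M a Q < x) :
    HasDerivAt (phase M a Q θ) (1 / (Δ M a Q x * speed M a Q θ x)) x := by
  have hlog := ((hasDerivAt_id' x).sub_const (rplus M a Q)).log (sub_pos.2 hx).ne'
  refine ((hlog.const_mul _).add (hasDerivAt_phaseCorrection hM ha hsub θ x)).congr_deriv ?_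
  have hw : x - rplus M a Q ≠ 0 := (sub_pos.2 hx).ne'
  have hm : x - rminus M a Q ≠ 0 := (sub_pos.2 ((rminus_lt_rplus hsub).trans hx)).ne'
  have hκ : κplus M a Q ≠ 0 := (κplus_pos ha hsub).ne'
  have hs : speed M a Q θ x ≠ 0 :=
    (speed_pos hM ha hsub θ ((rminus_lt_rplus hsub).trans hx)).ne'
  rw [eq_div_of_mul_eq hw ((mul_comm _ _).trans (sub_mul_residueSlope hM ha hsub θ hx.le)),
    Δ_eq_mul hsub.le, residue]
  field_simp
  ring

def rstarRegular (M a Q θ x : ℝ) : ℝ :=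
  x - 1 / (2 * κminus M a Q) * Real.log (ramp (rminus M a Q) (rplus M a Q) x - rminus M a Q)
    - phaseCorrection M a Q θ x

theorem rstar_eq_phase_add (hsub : a ^ 2 + Q ^ 2 < M ^ 2) (R0 θ : ℝ) {x : ℝ}
    (hx : rplus M a Q ≤ x) :
    rstar M a Q R0 x = phase M a Q θ x + rstarRegular M a Q θ x + R0 := by
  rw [rstar, phase, rstarRegular, ramp_of_le (rminus_lt_rplus hsub) hx]
  ring

theorem contDiff_rstarRegular (hM : 0 < M) (ha : 0 < a) (hsub : a ^ 2 + Q ^ 2 < M ^ 2) :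
    ContDiff ℝ ∞ ↿(rstarRegular M a Q) :=
  (contDiff_snd.sub (contDiff_const.mul
    ((((contDiff_ramp _ _).comp contDiff_snd).sub contDiff_const).log
      fun p => (sub_pos.2 (lt_ramp (rminus_lt_rplus hsub) p.2)).ne'))).sub
    (contDiff_phaseCorrection hM ha hsub)

def amplitude (M a Q θ r0 : ℝ) : ℝ :=
  -(deriv (rstarRegular M a Q θ) (rplus M a Q)
    * ((r0 - rplus M a Q) * Real.exp (2 * κplus M a Q * phaseCorrection M a Q θ r0)))

theorem contDiff_amplitude (hM : 0 < M) (ha : 0 < a) (hsub : a ^ 2 + Q ^ 2 < M ^ 2) :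
    ContDiff ℝ ∞ ↿(amplitude M a Q) :=
  ((((contDiff_rstarRegular hM ha hsub).uncurry_deriv le_rfl).comp
    (contDiff_fst.prodMk contDiff_const)).mul ((contDiff_snd.sub contDiff_const).mul
      (Real.contDiff_exp.comp (contDiff_const.mul (contDiff_phaseCorrection hM ha hsub))))).neg

def offset (M a Q R0 θ r0 : ℝ) : ℝ :=
  phase M a Q θ r0 + rstarRegular M a Q θ (rplus M a Q) + R0

theorem contDiffOn_offset (hM : 0 < M) (ha : 0 < a) (hsub : a ^ 2 + Q ^ 2 < M ^ 2) (R0 : ℝ) :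
    ContDiffOn ℝ ∞ ↿(offset M a Q R0) (univ ×ˢ Ioi (rplus M a Q)) := by
  refine ContDiffOn.add (ContDiffOn.add ?_ ((contDiff_rstarRegular hM ha hsub).comp
    (contDiff_fst.prodMk contDiff_const)).contDiffOn) contDiffOn_const
  refine ContDiffOn.add (contDiffOn_const.mul ((contDiffOn_snd.sub contDiffOn_const).log
    fun p hp => (sub_pos.2 hp.2).ne')) (contDiff_phaseCorrection hM ha hsub).contDiffOn

theorem phase_collapse_add_eq (hM : 0 < M) (ha : 0 < a) (hsub : a ^ 2 + Q ^ 2 < M ^ 2) {θ : ℝ}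
    {r : ℝ → ℝ} (hr : ∀ t, 0 ≤ t → rplus M a Q < r t ∧ HasDerivAt r (V M a Q θ (r t)) t)
    {t : ℝ} (ht : 0 ≤ t) : phase M a Q θ (r t) + t = phase M a Q θ (r 0) :=
  comp_add_eq_initial_of_deriv_mul_eq_neg_one (U := Ioi (rplus M a Q)) hr
    (fun _ hx => hasDerivAt_phase hM ha hsub θ hx)
    (fun x hx => by
      rw [V_eq_neg_Δ_mul_speed, mul_neg, one_div_mul_cancel (Δ_mul_speed_pos hM ha hsub θ hx).ne'])
    ht

theorem collapse_le_initial (hM : 0 < M) (ha : 0 < a) (hsub : a ^ 2 + Q ^ 2 < M ^ 2) {θ : ℝ}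
    {r : ℝ → ℝ} (hr : ∀ t, 0 ≤ t → rplus M a Q < r t ∧ HasDerivAt r (V M a Q θ (r t)) t)
    {t : ℝ} (ht : 0 ≤ t) : r t ≤ r 0 :=
  le_initial_of_hasDerivAt_nonpos (U := Ioi (rplus M a Q)) hr
    (fun x hx => by
      rw [V_eq_neg_Δ_mul_speed]; exact neg_nonpos.2 (Δ_mul_speed_pos hM ha hsub θ hx).le) ht

theorem exists_uniform_bounds (hM : 0 < M) (ha : 0 < a) (hsub : a ^ 2 + Q ^ 2 < M ^ 2)
    (r2 : ℝ) : ∃ S L₁ L₂ L₃ : ℝ, 0 ≤ L₁ ∧ 0 ≤ L₂ ∧ 0 ≤ L₃ ∧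
      ∀ θ ∈ Icc 0 π, ∀ x ∈ Icc (rplus M a Q) r2,
        |phaseCorrection M a Q θ x| ≤ S ∧
        |exp (-2 * κplus M a Q * phaseCorrection M a Q θ x) - 1| ≤ L₁ * (x - rplus M a Q) ∧
        |rstarRegular M a Q θ x - rstarRegular M a Q θ (rplus M a Q)
            - deriv (rstarRegular M a Q θ) (rplus M a Q) * (x - rplus M a Q)|
          ≤ L₂ * (x - rplus M a Q) ^ 2 ∧
        |deriv (rstarRegular M a Q θ) (rplus M a Q)| ≤ L₃ := by
  have hΨ := contDiff_phaseCorrection hM ha hsub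
  have hg := contDiff_rstarRegular hM ha hsub
  have hexpΨ : ContDiff ℝ 1
      ↿(fun θ x => exp (-2 * κplus M a Q * phaseCorrection M a Q θ x)) :=
    Real.contDiff_exp.comp (contDiff_const.mul (hΨ.of_le (by simp)))
  obtain ⟨S, -, hS⟩ :=
    exists_abs_le_of_continuous_uncurry hΨ.continuous isCompact_Icc (rplus M a Q) r2
  obtain ⟨L₁, hL₁0, hL₁⟩ :=
    exists_abs_sub_le_mul_of_contDiff hexpΨ isCompact_Icc (rplus M a Q) r2
  obtain ⟨L₂, hL₂0, hL₂⟩ := exists_abs_sub_sub_deriv_le_mul_sq_of_contDiff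
    (hg.of_le (by norm_cast)) isCompact_Icc (rplus M a Q) r2
  obtain ⟨L₃, hL₃0, hL₃⟩ := exists_abs_le_of_continuous_uncurry
    (hg.uncurry_deriv (m := 0) (by simp)).continuous isCompact_Icc (rplus M a Q) r2
  refine ⟨S, L₁, L₂, L₃, hL₁0, hL₂0, hL₃0, fun θ hθ x hx =>
    ⟨hS θ hθ x hx, ?_, hL₂ θ hθ x hx, hL₃ θ hθ _ ⟨le_rfl, hx.1.trans hx.2⟩⟩⟩
  simpa [phaseCorrection] using hL₁ θ hθ x hx

theorem exists_abs_rstar_add_sub_offset_le (hM : 0 < M) (ha : 0 < a)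
    (hsub : a ^ 2 + Q ^ 2 < M ^ 2) (R0 : ℝ) {r2 : ℝ} (hr2 : rplus M a Q < r2) :
    ∃ C, 0 < C ∧ ∀ θ ∈ Icc 0 π, ∀ r0 ∈ Ioc (rplus M a Q) r2, ∀ x ∈ Ioc (rplus M a Q) r2,
      ∀ t, phase M a Q θ x + t = phase M a Q θ r0 →
        |rstar M a Q R0 x + t + amplitude M a Q θ r0 * exp (-2 * κplus M a Q * t)
            - offset M a Q R0 θ r0| ≤ C * exp (-4 * κplus M a Q * t) := by
  set κ := κplus M a Q
  set rp := rplus M a Q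
  set Ψ := phaseCorrection M a Q
  set g := rstarRegular M a Q
  have hκ : 0 < κ := κplus_pos ha hsub
  obtain ⟨S, L₁, L₂, L₃, hL₁, hL₂, hL₃, hbounds⟩ := exists_uniform_bounds hM ha hsub r2
  set K := (r2 - rp) * exp (2 * κ * S)
  set K' := K * exp (2 * κ * S)
  have hK : 0 ≤ K := mul_nonneg (sub_pos.2 hr2).le (exp_pos _).le
  refine ⟨L₂ * K' ^ 2 + L₃ * K * L₁ * K' + 1, by positivity,
    fun θ hθ r0 hr0 x hx t hphase => ?_⟩
  obtain ⟨hΨx, hu, hTaylor, hg'⟩ := hbounds θ hθ x ⟨hx.1.le, hx.2⟩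
  have hΨr0 := abs_le.1 (hbounds θ hθ r0 ⟨hr0.1.le, hr0.2⟩).1
  set α := (r0 - rp) * exp (2 * κ * Ψ θ r0)
  set e := exp (-2 * κ * t)
  have hw : x - rp = α * e * exp (-2 * κ * Ψ θ x) :=
    eq_mul_exp_of_log_add_eq hκ.ne' (sub_pos.2 hx.1) (sub_pos.2 hr0.1) hphase
  have hαK : α ≤ K := mul_le_mul (by linarith [hr0.2]) (exp_le_exp.2 (by nlinarith))
    (exp_pos _).le (sub_pos.2 hr2).le
  have hwK : x - rp ≤ K' * e := by
    have hu : exp (-2 * κ * Ψ θ x) ≤ exp (2 * κ * S) :=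
      exp_le_exp.2 (by nlinarith [(abs_le.1 hΨx).1])
    rw [hw]
    calc α * e * exp (-2 * κ * Ψ θ x) ≤ K * e * exp (2 * κ * S) := by gcongr
      _ = K' * e := by ring
  have hdecomp : rstar M a Q R0 x + t + amplitude M a Q θ r0 * e - offset M a Q R0 θ r0
      = g θ x - g θ rp - deriv (g θ) rp * (α * e) := by
    rw [rstar_eq_phase_add hsub R0 θ hx.1.le, amplitude, offset]
    linear_combination hphase
  have he : exp (-4 * κ * t) = e ^ 2 := by rw [← exp_nat_mul]; ring_nf
  rw [hdecomp, he]
  refine (abs_sub_mul_le_of_linearization hw (sub_pos.2 hx.1).le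
    (mul_nonneg (sub_pos.2 hr0.1).le (exp_pos _).le) (exp_pos _).le hαK hwK hTaylor hg' hu
    hL₁ hL₂).trans ?_
  exact mul_le_mul_of_nonneg_right (le_add_of_nonneg_right zero_le_one) (sq_nonneg e)

theorem regge_wheeler_asymptotics (M a Q R0 : ℝ) (hM : 0 < M) (ha : 0 < a)
    (hsub : a ^ 2 + Q ^ 2 < M ^ 2)
    (rr : ℝ → ℝ → ℝ → ℝ)
    (hsol : ∀ θ ∈ Set.Icc (0 : ℝ) Real.pi, ∀ r0 : ℝ, rplus M a Q < r0 →
      rr 0 θ r0 = r0 ∧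
      (∀ t : ℝ, 0 ≤ t → rplus M a Q < rr t θ r0 ∧
        HasDerivAt (fun t' => rr t' θ r0) (V M a Q θ (rr t θ r0)) t)) :
    ∃ A B : ℝ → ℝ → ℝ,
      ContDiffOn ℝ (⊤ : ℕ∞) (fun p : ℝ × ℝ => A p.1 p.2)
        (Set.Icc 0 Real.pi ×ˢ Set.Ioi (rplus M a Q)) ∧
      ContDiffOn ℝ (⊤ : ℕ∞) (fun p : ℝ × ℝ => B p.1 p.2)
        (Set.Icc 0 Real.pi ×ˢ Set.Ioi (rplus M a Q)) ∧
      ∀ r1 r2 : ℝ, rplus M a Q < r1 → r1 ≤ r2 →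
        ∃ C : ℝ, 0 < C ∧
          ∀ t : ℝ, 0 ≤ t → ∀ θ ∈ Set.Icc (0 : ℝ) Real.pi, ∀ r0 ∈ Set.Icc r1 r2,
            |rstar M a Q R0 (rr t θ r0) + t
                + A θ r0 * Real.exp (-2 * κplus M a Q * t) - B θ r0|
              ≤ C * Real.exp (-4 * κplus M a Q * t) := by
  refine ⟨amplitude M a Q, offset M a Q R0, (contDiff_amplitude hM ha hsub).contDiffOn,
    (contDiffOn_offset hM ha hsub R0).mono (prod_mono (subset_univ _) subset_rfl),
    fun r1 r2 hr1 hr12 => ?_⟩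
  obtain ⟨C, hC, hbound⟩ := exists_abs_rstar_add_sub_offset_le hM ha hsub R0 (hr1.trans_le hr12)
  refine ⟨C, hC, fun t ht θ hθ r0 hr0 => ?_⟩
  have hr0 : r0 ∈ Ioc (rplus M a Q) r2 := ⟨hr1.trans_le hr0.1, hr0.2⟩
  obtain ⟨hinit, htraj⟩ := hsol θ hθ r0 hr0.1
  refine hbound θ hθ r0 hr0 (rr t θ r0)
    ⟨(htraj t ht).1, (collapse_le_initial hM ha hsub htraj ht).trans (hinit.trans_le hr0.2)⟩ t ?_
  rw [phase_collapse_add_eq hM ha hsub htraj ht, hinit]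

end Stmt5
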